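/- arXiv:0806.0043 — 3 statements merged into one kernel-verified Lean document; each statement's English description precedes it below -/
import Mathlib

section
/- For every finite word u over A₄: if f(u) lies in ker ψ (i.e., each letter of A₄ occurs in f(u) a number of times divisible by 4), then u lies in ker ψ. -/
/-- The four-letter alphabet `A₄ = {1,2,3,4}`; the value `k : Fin 4` represents letter `k+1`. -/
abbrev A4 := Fin 4

/-- The morphism `f` on letters: `f(1)=121, f(2)=123, f(3)=141, f(4)=142`
(letters `1,2,3,4` encoded as `0,1,2,3`). -/
def fm : A4 → List A4
  | 0 => [0, 1, 0]
  | 1 => [0, 1, 2]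
  | 2 => [0, 3, 0]
  | 3 => [0, 3, 1]

/-- The morphism `f` extended to words by concatenation. -/
def fw (u : List A4) : List A4 := u.flatMap fm

/-- The fixed point `w` of `f` starting with the letter `1`: since `|f^k(1)| = 3^k` and each
`f^k(1)` is a prefix of `f^(k+1)(1)`, the `n`-th letter of `w` is the `n`-th letter of
`f^(n+1)(1)`. -/
def w (n : ℕ) : A4 := ((fw^[n + 1]) [0]).getD n 0

/-- The finite word `t` occurs at position `i` in the infinite word `x`. -/
def OccursAt {α : Type*} (t : List α) (x : ℕ → α) (i : ℕ) : Prop :=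
  t = (List.range t.length).map fun k => x (i + k)

/-- The finite word `v` is a factor of the infinite word `x`. -/
def FactorOf {α : Type*} (v : List α) (x : ℕ → α) : Prop :=
  ∃ i, OccursAt v x i

/-- The finite word `v` has period `q ≥ 1`: `v(j) = v(j+q)` whenever `0 ≤ j < |v| - q`. -/
def HasPeriod {α : Type*} (v : List α) (q : ℕ) : Prop :=
  1 ≤ q ∧ ∀ j, j + q < v.length → v[j]? = v[j + q]?

/-- A word lies in `ker ψ` if each letter of `A₄` occurs in it a number of times
divisible by `4`. -/
def InKerPsi (u : List A4) : Prop := ∀ a : A4, 4 ∣ u.count a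

/-- `q` is a kernel period of `v`: `1 ≤ q ≤ |v|`, `v` has period `q`, and the prefix of `v`
of length `q` lies in `ker ψ`. -/
def KernelPeriod (v : List A4) (q : ℕ) : Prop :=
  q ≤ v.length ∧ HasPeriod v q ∧ InKerPsi (v.take q)

lemma fw_counts (u : List A4) :
    (fw u).count 0 = 2 * u.count 0 + u.count 1 + 2 * u.count 2 + u.count 3 ∧
    (fw u).count 1 = u.count 0 + u.count 1 + u.count 3 ∧
    (fw u).count 2 = u.count 1 ∧
    (fw u).count 3 = u.count 2 + u.count 3 := by
  induction u with
  | nil => simp [fw]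
  | cons x t ih =>
    have hfw : fw (x :: t) = fm x ++ fw t := by simp [fw]
    obtain ⟨h0, h1, h2, h3⟩ := ih
    fin_cases x <;>
      simp_all [hfw, List.count_append, List.count_cons, fm] <;> omega

/-- If `f(u)` lies in `ker ψ`, then `u` lies in `ker ψ`. -/
theorem stmt7 (u : List A4) (h : InKerPsi (fw u)) : InKerPsi u := by
  obtain ⟨h0, h1, h2, h3⟩ := fw_counts u
  have d0 := h 0
  have d1 := h 1
  have d2 := h 2
  have d3 := h 3
  intro a
  fin_cases a <;> simp_all <;> omega
end

section
/- If t is a factor of w of length 3 occurring at positions i and j (that is, w(i)w(i+1)w(i+2) = w(j)w(j+1)w(j+2)), then i ≡ j (mod 3). -/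
/-! Every image `f(a)` starts with the letter `1` (encoded as `0`) and has middle letter `2` or
`4`. Since `f^(n+1)(1) = f(f^n(1))` is a concatenation of such images, `w(n)` is the letter at index
`n % 3` of some `f(a)`; hence `w(n) = 1` for `n ≡ 0` and `w(n) ≠ 1` for `n ≡ 1 (mod 3)`. If
`i ≢ j (mod 3)`, one residue is the successor of the other, and a shift `k < 3` moves the pair to
residues `0` and `1`, where the two windows disagree. -/

theorem List.getElem?_flatMap_of_length_eq {α β : Type*} {g : α → List β} {L : ℕ}
    (hg : ∀ a, (g a).length = L) (u : List α) (m : ℕ) :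
    (u.flatMap g)[m]? = u[m / L]?.bind fun a => (g a)[m % L]? := by
  rcases Nat.eq_zero_or_pos L with rfl | hL
  · have hnil : u.flatMap g = [] := by simp [← List.length_eq_zero_iff, hg]
    cases u <;> simp [hnil, hg]
  induction u generalizing m with
  | nil => simp
  | cons a us ih =>
    rw [List.flatMap_cons, List.getElem?_append, hg]
    split_ifs with hm
    · simp [Nat.div_eq_of_lt hm, Nat.mod_eq_of_lt hm]
    · obtain ⟨m, rfl⟩ := Nat.exists_eq_add_of_le' (Nat.le_of_not_lt hm)
      rw [Nat.add_sub_cancel, ih, Nat.add_div_right m hL, List.getElem?_cons_succ,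
        Nat.add_mod_right]

lemma length_fm (a : A4) : (fm a).length = 3 := by
  fin_cases a <;> rfl

lemma length_fw (u : List A4) : (fw u).length = 3 * u.length := by
  simp [fw, List.length_flatMap, length_fm, mul_comm]

lemma length_iterate_fw (n : ℕ) : (fw^[n] [0]).length = 3 ^ n := by
  induction n with
  | zero => rfl
  | succ n ih => rw [Function.iterate_succ_apply', length_fw, ih, pow_succ']

lemma exists_getElem?_fm_eq_w (n : ℕ) : ∃ a, (fm a)[n % 3]? = some (w n) := by
  have hn : n / 3 < (fw^[n] [0]).length := by
    rw [length_iterate_fw]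
    exact (Nat.div_le_self n 3).trans_lt (Nat.lt_pow_self (by norm_num))
  obtain ⟨a, ha⟩ : ∃ a, (fw^[n] [0])[n / 3]? = some a := ⟨_, List.getElem?_eq_getElem hn⟩
  have hr : n % 3 < (fm a).length := (length_fm a).symm ▸ Nat.mod_lt n (by norm_num)
  refine ⟨a, ?_⟩
  rw [w, Function.iterate_succ_apply', List.getD_eq_getElem?_getD, fw,
    List.getElem?_flatMap_of_length_eq length_fm, ha, Option.bind_some,
    List.getElem?_eq_getElem hr, Option.getD_some]

lemma w_eq_zero_of_mod_three_eq_zero {n : ℕ} (hn : n % 3 = 0) : w n = 0 := by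
  obtain ⟨a, ha⟩ := exists_getElem?_fm_eq_w n
  rw [hn] at ha
  fin_cases a <;> simpa [fm] using ha.symm

lemma w_ne_zero_of_mod_three_eq_one {n : ℕ} (hn : n % 3 = 1) : w n ≠ 0 := by
  obtain ⟨a, ha⟩ := exists_getElem?_fm_eq_w n
  rw [hn] at ha
  fin_cases a <;> simp [fm] at ha <;> simp [← ha]

lemma mod_three_ne_succ_of_window_eq {i j : ℕ} (h : ∀ k, k < 3 → w (i + k) = w (j + k)) :
    j % 3 ≠ (i + 1) % 3 := by
  intro hij
  set k := (3 - i % 3) % 3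
  refine w_ne_zero_of_mod_three_eq_one (n := j + k) (by omega) ?_
  rw [← h k (by omega)]
  exact w_eq_zero_of_mod_three_eq_zero (by omega)

/-- If a factor of `w` of length `3` occurs at positions `i` and `j`, then `i ≡ j (mod 3)`. -/
theorem stmt8 (i j : ℕ) (h : ∀ k, k < 3 → w (i + k) = w (j + k)) : i % 3 = j % 3 := by
  have hij := mod_three_ne_succ_of_window_eq h
  have hji := mod_three_ne_succ_of_window_eq fun k hk => (h k hk).symm
  omega
end

section
/- Let v be a factor of w with kernel period q, let a ∈ A₄, and suppose that a·v is a factor of w and that a·v has period q. Then a·v also has kernel period q (its prefix of length q lies in ker ψ). -/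
/-- If `v` is a factor of `w` with kernel period `q`, and `a·v` is a factor of `w` having
period `q`, then `a·v` also has kernel period `q`. -/
theorem stmt11 (v : List A4) (q : ℕ) (hfac : FactorOf v w) (hker : KernelPeriod v q)
    (a : A4) (hafac : FactorOf (a :: v) w) (haper : HasPeriod (a :: v) q) :
    KernelPeriod (a :: v) q := by
  obtain ⟨hqlen, hper, hk⟩ := hker
  obtain ⟨hq1, hpera⟩ := haper
  refine ⟨by simpa using Nat.le_succ_of_le hqlen, ⟨hq1, hpera⟩, ?_⟩
  -- a = v[q-1]
  have hqpos : 0 < q := hq1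
  have h0 := hpera 0 (by simpa using Nat.lt_succ_of_le hqlen)
  simp only [Nat.zero_add] at h0
  have hgq : (a :: v)[q]? = v[q-1]? := by
    obtain ⟨m, rfl⟩ : ∃ m, q = m + 1 := ⟨q - 1, (Nat.succ_pred_eq_of_pos hqpos).symm⟩
    simp
  have ha : v[q-1]? = some a := by
    rw [← hgq, ← h0]; simp
  have hm : q - 1 < v.length := by omega
  intro b
  have key : ((a :: v).take q).count b = (v.take q).count b := by
    obtain ⟨m, rfl⟩ : ∃ m, q = m + 1 := ⟨q - 1, (Nat.succ_pred_eq_of_pos hqpos).symm⟩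
    rw [List.take_succ (l := v)]
    simp only [List.take_succ_cons]
    have : v[m]? = some a := by simpa using ha
    rw [this]
    simp [List.count_append, List.count_cons]
  rw [key]; exact hk b
end
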